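/- arXiv:1705.10213 — 3 statements merged into one kernel-verified Lean document; each statement's English description precedes it below -/
import Mathlib

section
/- For the linear autonomous saddle system ẋ = λx, ẏ = -λy with λ > 0 and p ∈ (0,1), for any fixed y_0 ≠ 0 and τ > 0, the function x_0 ↦ M_p((x_0,y_0),0,τ) = 2(|x_0|^p + |y_0|^p)·λ^{p-1}·sinh(λpτ)/p is not differentiable at x_0 = 0. -/
open Real Filter

/-- For the linear autonomous saddle with `λ > 0` and `p ∈ (0,1)`, for any fixed `y₀ ≠ 0`
and `τ > 0`, the map `x₀ ↦ M_p((x₀,y₀),0,τ) = 2(|x₀|^p + |y₀|^p)·λ^(p-1)·sinh(λpτ)/p`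
is not differentiable at `x₀ = 0`. -/
theorem Mp_not_differentiable_on_stable_manifold (lam p τ y₀ : ℝ)
    (hlam : 0 < lam) (hp0 : 0 < p) (hp1 : p < 1) (hy₀ : y₀ ≠ 0) (hτ : 0 < τ) :
    ¬ DifferentiableAt ℝ
        (fun x₀ : ℝ =>
          2 * (|x₀| ^ p + |y₀| ^ p) * lam ^ (p - 1) * Real.sinh (lam * p * τ) / p) 0 := by
  intro hd
  set f : ℝ → ℝ := fun x₀ : ℝ =>
      2 * (|x₀| ^ p + |y₀| ^ p) * lam ^ (p - 1) * Real.sinh (lam * p * τ) / p with hf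
  set K : ℝ := 2 * lam ^ (p - 1) * Real.sinh (lam * p * τ) / p with hKdef
  have hsinh : 0 < Real.sinh (lam * p * τ) := Real.sinh_pos_iff.mpr (by positivity)
  have hKpos : 0 < K := by
    apply div_pos _ hp0
    positivity
  -- the slope tends to a finite limit
  have h1 : Tendsto (slope f 0) (nhdsWithin 0 {(0:ℝ)}ᶜ) (nhds (deriv f 0)) :=
    hasDerivAt_iff_tendsto_slope.mp hd.hasDerivAt
  have h2 : Tendsto (slope f 0) (nhdsWithin 0 (Set.Ioi 0)) (nhds (deriv f 0)) :=
    h1.mono_left (nhdsWithin_mono _ fun x hx => ne_of_gt hx)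
  -- on the right of 0, slope f 0 x = K * x^(p-1)
  have heq : ∀ x ∈ Set.Ioi (0:ℝ), slope f 0 x = K * x ^ (p - 1) := by
    intro x hx
    have hx0 : (0:ℝ) < x := hx
    have hxabs : |x| = x := abs_of_pos hx0
    have h0p : (0:ℝ) ^ p = 0 := Real.zero_rpow (ne_of_gt hp0)
    rw [slope_def_field]
    have hfx : f x = 2 * (x ^ p + |y₀| ^ p) * lam ^ (p - 1) * Real.sinh (lam * p * τ) / p := by
      simp [hf, hxabs]
    have hf0 : f 0 = 2 * (|y₀| ^ p) * lam ^ (p - 1) * Real.sinh (lam * p * τ) / p := by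
      simp [hf, h0p]
    have hnum : f x - f 0 = K * x ^ p := by
      rw [hfx, hf0, hKdef]; ring
    have hrs : x ^ (p - 1) = x ^ p / x := by
      rw [Real.rpow_sub hx0, Real.rpow_one]
    rw [hnum, hrs, sub_zero]
    ring
  -- K * x^(p-1) → ∞ as x → 0⁺
  have h3 : Tendsto (fun x : ℝ => x ^ (p - 1)) (nhdsWithin 0 (Set.Ioi 0)) atTop := by
    have hbase : Tendsto (fun x : ℝ => x⁻¹ ^ (1 - p)) (nhdsWithin 0 (Set.Ioi 0)) atTop :=
      (tendsto_rpow_atTop (by linarith : (0:ℝ) < 1 - p)).comp tendsto_inv_nhdsGT_zero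
    refine hbase.congr' ?_
    filter_upwards [self_mem_nhdsWithin] with x hx
    have hx0 : (0:ℝ) < x := hx
    rw [Real.inv_rpow hx0.le, ← Real.rpow_neg hx0.le]
    congr 1
    ring
  have h4 : Tendsto (slope f 0) (nhdsWithin 0 (Set.Ioi 0)) atTop := by
    refine (h3.const_mul_atTop hKpos).congr' ?_
    filter_upwards [self_mem_nhdsWithin] with x hx
    exact (heq x hx).symm
  exact not_tendsto_nhds_of_tendsto_atTop h4 _ h2
end

section
/- For the nonlinear autonomous saddle in Moser normal form ξ̇ = F'(ξη)ξ, η̇ = -F'(ξη)η, the Lagrangian descriptor satisfies M_p((ξ_0,η_0),0,τ) = 2(|ξ_0|^p + |η_0|^p) · |F'(ξ_0η_0)|^p/(p·F'(ξ_0η_0)) · sinh(p·F'(ξ_0η_0)·τ), provided F'(ξ_0η_0) ≠ 0. -/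
/-!
Since `F'(ξη)` is constant along the trajectory, `|ξ̇|^p = |ξ₀|^p |F'|^p e^{pF't}` and
`|η̇|^p = |η₀|^p |F'|^p e^{-pF't}`. Over the symmetric interval `[-τ, τ]` both exponentials
integrate to `2 sinh(pF'τ)/(pF')`, which gives the formula.
-/

open Real intervalIntegral

theorem integral_exp_mul_symm {c : ℝ} (hc : c ≠ 0) (τ : ℝ) :
    ∫ t in (-τ)..τ, exp (c * t) = 2 * sinh (c * τ) / c := by
  rw [integral_comp_mul_left (fun x => exp x) hc, integral_exp, sinh_eq, smul_eq_mul]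
  field_simp

theorem integral_mul_exp_add_mul_exp_neg {k : ℝ} (hk : k ≠ 0) (A B τ : ℝ) :
    ∫ t in (-τ)..τ, (A * exp (k * t) + B * exp (-(k * t))) = 2 * (A + B) * sinh (k * τ) / k := by
  have hint : ∀ c : ℝ, IntervalIntegrable (fun t => exp (c * t)) MeasureTheory.volume (-τ) τ :=
    fun c => (continuous_exp.comp (continuous_const.mul continuous_id)).intervalIntegrable _ _
  simp_rw [← neg_mul]
  rw [integral_add ((hint k).const_mul A) ((hint (-k)).const_mul B), integral_const_mul,
    integral_const_mul, integral_exp_mul_symm hk, integral_exp_mul_symm (neg_ne_zero.mpr hk),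
    neg_mul, sinh_neg]
  field_simp

theorem abs_mul_exp_mul_rpow (a b c p : ℝ) :
    |a * exp b * c| ^ p = |a| ^ p * |c| ^ p * exp (p * b) := by
  rw [abs_mul, abs_mul, abs_exp, mul_rpow (by positivity) (abs_nonneg c),
    mul_rpow (abs_nonneg a) (exp_nonneg b), ← exp_mul, mul_comm b p]
  ring

theorem Mp_moser_normal_form_general (F : ℝ → ℝ) (p τ ξ₀ η₀ : ℝ)
    (hp0 : 0 < p)
    (hF' : deriv F (ξ₀ * η₀) ≠ 0) :
    ∫ t in (-τ)..τ,
        (|ξ₀ * Real.exp (deriv F (ξ₀ * η₀) * t) * deriv F (ξ₀ * η₀)| ^ p +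
         |η₀ * Real.exp (-(deriv F (ξ₀ * η₀) * t)) * deriv F (ξ₀ * η₀)| ^ p)
      = 2 * (|ξ₀| ^ p + |η₀| ^ p) * (|deriv F (ξ₀ * η₀)| ^ p / (p * deriv F (ξ₀ * η₀))) *
          Real.sinh (p * deriv F (ξ₀ * η₀) * τ) := by
  simp_rw [abs_mul_exp_mul_rpow, mul_neg, ← mul_assoc]
  rw [integral_mul_exp_add_mul_exp_neg (mul_ne_zero hp0.ne' hF')]
  field_simp

/-- For the nonlinear autonomous saddle in Moser normal form, with `F' = F'(ξ₀η₀) ≠ 0`,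
the Lagrangian descriptor satisfies
`M_p((ξ₀,η₀),0,τ) = 2(|ξ₀|^p + |η₀|^p) · |F'|^p/(p·F') · sinh(p·F'·τ)`. -/
theorem Mp_moser_normal_form (F : ℝ → ℝ) (p τ ξ₀ η₀ : ℝ)
    (hF : Differentiable ℝ F) (hp0 : 0 < p) (hp1 : p ≤ 1) (hτ : 0 < τ)
    (hF' : deriv F (ξ₀ * η₀) ≠ 0) :
    ∫ t in (-τ)..τ,
        (|ξ₀ * Real.exp (deriv F (ξ₀ * η₀) * t) * deriv F (ξ₀ * η₀)| ^ p +
         |η₀ * Real.exp (-(deriv F (ξ₀ * η₀) * t)) * deriv F (ξ₀ * η₀)| ^ p)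
      = 2 * (|ξ₀| ^ p + |η₀| ^ p) * (|deriv F (ξ₀ * η₀)| ^ p / (p * deriv F (ξ₀ * η₀))) *
          Real.sinh (p * deriv F (ξ₀ * η₀) * τ) :=
  Mp_moser_normal_form_general F p τ ξ₀ η₀ hp0 hF'
end

section
/- For the nonautonomous linear saddle ẋ = f(t)x, ẏ = -f(t)y with f continuous and positive, the Lagrangian descriptor factors as M_p((x_0,y_0),t_0,τ) = |x_0|^p · A + |y_0|^p · B where A = ∫_{t_0-τ}^{t_0+τ} |e^{F(t)} f(t)|^p dt and B = ∫_{t_0-τ}^{t_0+τ} |e^{-F(t)} f(t)|^p dt are strictly positive constants independent of (x_0, y_0). Consequently, for p ∈ (0,1) and any y_0 ≠ 0, the map x_0 ↦ M_p((x_0,y_0),t_0,τ) is not differentiable at x_0 = 0. -/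
open Real intervalIntegral Set Filter Topology MeasureTheory

/-! Both solution components are a constant times a fixed function of `t`, and `|c·u|^p = |c|^p·|u|^p`,
so `M_p` is `|x₀|^p·A + |y₀|^p·B`; `A, B > 0` because `f > 0`. Near `x₀ = 0` the descriptor is then
an affine image of `|x₀|^p`, whose right difference quotient `x₀^(p-1)` blows up for `p < 1`. -/

theorem not_differentiableAt_abs_rpow_zero {p : ℝ} (hp0 : 0 < p) (hp1 : p < 1) :
    ¬ DifferentiableAt ℝ (fun x : ℝ ↦ |x| ^ p) 0 := by
  intro h
  have hslope : Tendsto (fun x : ℝ ↦ x ^ (p - 1)) (𝓝[>] 0)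
      (𝓝 (deriv (fun x : ℝ ↦ |x| ^ p) 0)) := by
    refine tendsto_nhdsWithin_congr (fun x (hx : 0 < x) ↦ ?_)
      h.hasDerivAt.tendsto_slope_zero_right
    rw [zero_add, abs_zero, zero_rpow hp0.ne', sub_zero, abs_of_pos hx, smul_eq_mul,
      ← rpow_neg_one, ← rpow_add hx, neg_add_eq_sub]
  exact not_tendsto_nhds_of_tendsto_atTop (tendsto_rpow_neg_nhdsGT_zero (by linarith)) _ hslope

theorem not_differentiableAt_abs_rpow_mul_add {p A : ℝ} (hp0 : 0 < p) (hp1 : p < 1)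
    (hA : A ≠ 0) (C : ℝ) : ¬ DifferentiableAt ℝ (fun x : ℝ ↦ |x| ^ p * A + C) 0 := by
  intro h
  refine not_differentiableAt_abs_rpow_zero hp0 hp1 ?_
  simpa [hA] using (h.sub_const C).mul_const A⁻¹

theorem integral_abs_mul_rpow_add_abs_mul_rpow {a b p : ℝ} {g h : ℝ → ℝ} (x y : ℝ)
    (hg : IntervalIntegrable (fun t ↦ |g t| ^ p) volume a b)
    (hh : IntervalIntegrable (fun t ↦ |h t| ^ p) volume a b) :
    ∫ t in a..b, (|x * g t| ^ p + |y * h t| ^ p)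
      = |x| ^ p * (∫ t in a..b, |g t| ^ p) + |y| ^ p * ∫ t in a..b, |h t| ^ p := by
  simp only [abs_mul, mul_rpow (abs_nonneg _) (abs_nonneg _)]
  rw [integral_add (hg.const_mul _) (hh.const_mul _), intervalIntegral.integral_const_mul,
    intervalIntegral.integral_const_mul]

theorem Mp_nonautonomous_saddle_factorization_general (f : ℝ → ℝ) (t₀ τ p y₀ : ℝ)
    (hτ : 0 < τ) (hf : Continuous f)
    (hfpos : ∀ t ∈ Icc (t₀ - τ) (t₀ + τ), 0 < f t)
    (hp0 : 0 < p) (hp1 : p < 1) :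
    (∀ x₀ : ℝ,
      (∫ t in (t₀ - τ)..(t₀ + τ),
          (|x₀ * Real.exp (∫ s in (0:ℝ)..t, f s) * f t| ^ p +
           |y₀ * Real.exp (-(∫ s in (0:ℝ)..t, f s)) * f t| ^ p))
        = |x₀| ^ p * (∫ t in (t₀ - τ)..(t₀ + τ), |Real.exp (∫ s in (0:ℝ)..t, f s) * f t| ^ p)
          + |y₀| ^ p *
            (∫ t in (t₀ - τ)..(t₀ + τ), |Real.exp (-(∫ s in (0:ℝ)..t, f s)) * f t| ^ p)) ∧
    (0 < ∫ t in (t₀ - τ)..(t₀ + τ), |Real.exp (∫ s in (0:ℝ)..t, f s) * f t| ^ p) ∧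
    (0 < ∫ t in (t₀ - τ)..(t₀ + τ), |Real.exp (-(∫ s in (0:ℝ)..t, f s)) * f t| ^ p) ∧
    ¬ DifferentiableAt ℝ
        (fun x₀ : ℝ =>
          ∫ t in (t₀ - τ)..(t₀ + τ),
            (|x₀ * Real.exp (∫ s in (0:ℝ)..t, f s) * f t| ^ p +
             |y₀ * Real.exp (-(∫ s in (0:ℝ)..t, f s)) * f t| ^ p)) 0 := by
  have hF : Continuous fun t ↦ ∫ s in (0:ℝ)..t, f s :=
    continuous_primitive (fun a b ↦ hf.intervalIntegrable a b) 0
  have hnegF : Continuous fun t ↦ -∫ s in (0:ℝ)..t, f s := hF.neg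
  have hintegrable : ∀ {s : ℝ → ℝ}, Continuous s →
      IntervalIntegrable (fun t ↦ |exp (s t) * f t| ^ p) volume (t₀ - τ) (t₀ + τ) := fun hs ↦
    (((continuous_exp.comp hs).mul hf).abs.rpow_const fun _ ↦ Or.inr hp0.le).intervalIntegrable _ _
  have hpos : ∀ {s : ℝ → ℝ}, Continuous s → 0 < ∫ t in (t₀ - τ)..(t₀ + τ), |exp (s t) * f t| ^ p :=
    fun hs ↦ intervalIntegral_pos_of_pos_on (hintegrable hs)
      (fun t ht ↦ rpow_pos_of_pos (abs_pos.mpr (mul_ne_zero (exp_ne_zero _)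
        (hfpos t (Ioo_subset_Icc_self ht)).ne')) p) (by linarith)
  have hfactor : ∀ x₀ : ℝ,
      (∫ t in (t₀ - τ)..(t₀ + τ),
          (|x₀ * exp (∫ s in (0:ℝ)..t, f s) * f t| ^ p +
           |y₀ * exp (-(∫ s in (0:ℝ)..t, f s)) * f t| ^ p))
        = |x₀| ^ p * (∫ t in (t₀ - τ)..(t₀ + τ), |exp (∫ s in (0:ℝ)..t, f s) * f t| ^ p)
          + |y₀| ^ p * (∫ t in (t₀ - τ)..(t₀ + τ), |exp (-(∫ s in (0:ℝ)..t, f s)) * f t| ^ p) :=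
    fun x₀ ↦ by
      simpa only [mul_assoc] using
        integral_abs_mul_rpow_add_abs_mul_rpow x₀ y₀ (hintegrable hF) (hintegrable hnegF)
  refine ⟨hfactor, hpos hF, hpos hnegF, ?_⟩
  rw [funext hfactor]
  exact not_differentiableAt_abs_rpow_mul_add hp0 hp1 (hpos hF).ne' _

/-- For the nonautonomous linear saddle `ẋ = f(t)x, ẏ = -f(t)y` (with `F(t₀) = 0`
normalization, solution `x(t) = x₀e^{F(t)}`, `y(t) = y₀e^{-F(t)}`), the Lagrangian
descriptor factors as `M_p = |x₀|^p·A + |y₀|^p·B` with `A, B > 0` independent of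
`(x₀,y₀)`; consequently for `p ∈ (0,1)` and `y₀ ≠ 0` the map
`x₀ ↦ M_p((x₀,y₀),t₀,τ)` is not differentiable at `x₀ = 0`. -/
theorem Mp_nonautonomous_saddle_factorization (f : ℝ → ℝ) (t₀ τ p y₀ : ℝ)
    (hτ : 0 < τ) (hf : Continuous f)
    (hfpos : ∀ t ∈ Icc (t₀ - τ) (t₀ + τ), 0 < f t)
    (hp0 : 0 < p) (hp1 : p < 1) (hy₀ : y₀ ≠ 0) :
    (∀ x₀ : ℝ,
      (∫ t in (t₀ - τ)..(t₀ + τ),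
          (|x₀ * Real.exp (∫ s in (0:ℝ)..t, f s) * f t| ^ p +
           |y₀ * Real.exp (-(∫ s in (0:ℝ)..t, f s)) * f t| ^ p))
        = |x₀| ^ p * (∫ t in (t₀ - τ)..(t₀ + τ), |Real.exp (∫ s in (0:ℝ)..t, f s) * f t| ^ p)
          + |y₀| ^ p *
            (∫ t in (t₀ - τ)..(t₀ + τ), |Real.exp (-(∫ s in (0:ℝ)..t, f s)) * f t| ^ p)) ∧
    (0 < ∫ t in (t₀ - τ)..(t₀ + τ), |Real.exp (∫ s in (0:ℝ)..t, f s) * f t| ^ p) ∧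
    (0 < ∫ t in (t₀ - τ)..(t₀ + τ), |Real.exp (-(∫ s in (0:ℝ)..t, f s)) * f t| ^ p) ∧
    ¬ DifferentiableAt ℝ
        (fun x₀ : ℝ =>
          ∫ t in (t₀ - τ)..(t₀ + τ),
            (|x₀ * Real.exp (∫ s in (0:ℝ)..t, f s) * f t| ^ p +
             |y₀ * Real.exp (-(∫ s in (0:ℝ)..t, f s)) * f t| ^ p)) 0 :=
  Mp_nonautonomous_saddle_factorization_general f t₀ τ p y₀ hτ hf hfpos hp0 hp1
end
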